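/- Let k be a field and let kFS⁰(X,Y) ⊆ k[Surj(X,Y)] denote, for finite sets X, Y, the subspace of elements ξ such that for every injection i : U → X with |U| < |X|, the image of ξ under the precomposition-and-project map k[Surj(X,Y)] → k[Surj(U,Y)] (sending [f] to [f∘i] if f∘i is surjective and to 0 otherwise) is zero. Then kFS⁰ is closed under composition: for ξ ∈ kFS⁰(X,Y) and η ∈ kFS⁰(W,X), the composite ξ∘η (computed in the linearized surjection category) lies in kFS⁰(W,Y). Together with containing all identities, kFS⁰ forms a wide k-linear subcategory of the k-linearization of the category of finite sets and surjections. -/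

import Mathlib

/-! For a surjection `g`, the composite `ξ ∘ [g]` is the restriction of `ξ` along `g`, so
restricting `ξ ∘ [g]` along `i` gives the restriction of `ξ` along `g ∘ i`. When `g ∘ i` is
surjective this is `ξ ∘ [g ∘ i]`; when it is not, `g ∘ i` factors through its image, a proper
subset of `X`, and restriction along it kills `ξ ∈ kFS⁰`. Hence restriction along `i` commutes
with `ξ ∘ -`, and `η ∈ kFS⁰` forces `ξ ∘ η ∈ kFS⁰`. The identity lies in `kFS⁰` because
`id ∘ i` cannot be surjective when `i` starts from a smaller set. -/

open scoped Classical

/-- The set of surjections `X ↠ Y`. -/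
def SurjOn (X Y : Type*) : Type _ := {f : X → Y // Function.Surjective f}

variable (k : Type*) [Field k]

/-- The precomposition-and-project map along `i : U → X`: on basis elements it sends
`[f]` to `[f ∘ i]` if `f ∘ i` is surjective, and to `0` otherwise. -/
noncomputable def resMap {X Y U : Type*} (i : U → X) :
    ((SurjOn X Y) →₀ k) →ₗ[k] ((SurjOn U Y) →₀ k) :=
  Finsupp.lift ((SurjOn U Y) →₀ k) k (SurjOn X Y)
    (fun f => if h : Function.Surjective (f.1 ∘ i)
      then Finsupp.single ⟨f.1 ∘ i, h⟩ (1 : k) else 0)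

/-- `kFS⁰(X,Y)`: the subspace of `k[Surj(X,Y)]` of elements killed by every
precomposition-and-project map along an injection from a strictly smaller finite set. -/
noncomputable def kFSzero (X Y : Type*) [Fintype X] : Submodule k ((SurjOn X Y) →₀ k) where
  carrier := {ξ | ∀ (m : ℕ) (i : Fin m → X), Function.Injective i →
    m < Fintype.card X → resMap k i ξ = 0}
  add_mem' := by intro ξ η hξ hη m i hi hm; simp [map_add, hξ m i hi hm, hη m i hi hm]
  zero_mem' := by intro m i hi hm; simp
  smul_mem' := by intro c ξ hξ m i hi hm; simp [map_smul, hξ m i hi hm]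

/-- Bilinear composition in the linearised surjection category: on basis elements
`[f] ∘ [g] = [f ∘ g]`. -/
noncomputable def compFS {X Y W : Type*} (ξ : (SurjOn X Y) →₀ k)
    (η : (SurjOn W X) →₀ k) : (SurjOn W Y) →₀ k :=
  ξ.sum fun f c => η.sum fun g d =>
    Finsupp.single (⟨f.1 ∘ g.1, f.2.comp g.2⟩ : SurjOn W Y) (c * d)

theorem resMap_single {X Y U : Type*} (i : U → X) (f : SurjOn X Y) (c : k) :
    resMap k i (Finsupp.single f c) =
      if h : Function.Surjective (f.1 ∘ i) then Finsupp.single ⟨f.1 ∘ i, h⟩ c else 0 := by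
  rw [resMap, Finsupp.lift_apply, Finsupp.sum_single_index (by simp)]
  split_ifs
  · exact Finsupp.smul_single_one _ _
  · exact smul_zero _

theorem resMap_comp {X Y U V : Type*} (j : V → X) (s : U → V) (ξ : SurjOn X Y →₀ k) :
    resMap k (j ∘ s) ξ = resMap k s (resMap k j ξ) := by
  induction ξ using Finsupp.induction_linear with
  | zero => simp only [map_zero]
  | add ξ η hξ hη => simp only [map_add, hξ, hη]
  | single f c =>
    rw [resMap_single, resMap_single]
    by_cases hfj : Function.Surjective (f.1 ∘ j)
    · rw [dif_pos hfj]
      exact (resMap_single k s ⟨f.1 ∘ j, hfj⟩ c).symm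
    · have hfjs : ¬Function.Surjective (f.1 ∘ (j ∘ s)) :=
        fun h => hfj (Function.Surjective.of_comp (f := f.1 ∘ j) h)
      rw [dif_neg hfj, dif_neg hfjs, map_zero]

theorem resMap_eq_zero_of_injective {X Y V : Type*} [Fintype X] [Finite V]
    {ξ : SurjOn X Y →₀ k} (hξ : ξ ∈ kFSzero k X Y) (j : V → X) (hj : Function.Injective j)
    (hV : Nat.card V < Nat.card X) : resMap k j ξ = 0 := by
  let e := Finite.equivFin V
  have hj' : resMap k (j ∘ e.symm) ξ = 0 :=
    hξ _ _ (hj.comp e.symm.injective) (by rwa [← Nat.card_eq_fintype_card])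
  have hje : j = (j ∘ e.symm) ∘ e := by ext; simp
  rw [hje, resMap_comp, hj', map_zero]

theorem resMap_eq_zero_of_not_surjective {X Y U : Type*} [Fintype X]
    {ξ : SurjOn X Y →₀ k} (hξ : ξ ∈ kFSzero k X Y) (h : U → X)
    (hh : ¬Function.Surjective h) : resMap k h ξ = 0 := by
  obtain ⟨x, hx⟩ := not_forall.mp hh
  have hcard : Nat.card (Set.range h) < Nat.card X := Finite.card_subtype_lt (x := x) hx
  rw [← Set.coe_comp_rangeFactorization h, resMap_comp,
    resMap_eq_zero_of_injective k hξ _ Subtype.val_injective hcard, map_zero]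

theorem compFS_eq_linearCombination {X Y W : Type*} (ξ : SurjOn X Y →₀ k)
    (η : SurjOn W X →₀ k) :
    compFS k ξ η = Finsupp.linearCombination k (fun g : SurjOn W X => resMap k g.1 ξ) η := by
  rw [compFS, Finsupp.linearCombination_apply, Finsupp.sum_comm]
  refine Finsupp.sum_congr fun g _ => ?_
  rw [resMap, Finsupp.lift_apply, Finsupp.smul_sum]
  refine Finsupp.sum_congr fun f _ => ?_
  rw [dif_pos (f.2.comp g.2), smul_smul, mul_comm]
  exact (Finsupp.smul_single_one _ _).symm

theorem resMap_compFS {X Y W U : Type*} [Fintype X] {ξ : SurjOn X Y →₀ k}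
    (hξ : ξ ∈ kFSzero k X Y) (i : U → W) (η : SurjOn W X →₀ k) :
    resMap k i (compFS k ξ η) = compFS k ξ (resMap k i η) := by
  simp only [compFS_eq_linearCombination]
  induction η using Finsupp.induction_linear with
  | zero => simp only [map_zero]
  | add η η' hη hη' => simp only [map_add, hη, hη']
  | single g d =>
    rw [resMap_single, Finsupp.linearCombination_single, map_smul, ← resMap_comp]
    split_ifs with hgi
    · exact (Finsupp.linearCombination_single k (v := fun g : SurjOn U X => resMap k g.1 ξ)
        d (⟨g.1 ∘ i, hgi⟩ : SurjOn U X)).symm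
    · rw [resMap_eq_zero_of_not_surjective k hξ _ hgi, smul_zero, map_zero]

theorem kFSzero_closed_under_comp_and_id
    (X Y W : Type*) [Fintype X] [Fintype W] :
    (∀ ξ ∈ kFSzero k X Y, ∀ η ∈ kFSzero k W X, compFS k ξ η ∈ kFSzero k W Y) ∧
    (Finsupp.single (⟨id, Function.surjective_id⟩ : SurjOn X X) (1 : k) ∈
      kFSzero k X X) := by
  constructor
  · intro ξ hξ η hη m i hi hm
    rw [resMap_compFS k hξ, hη m i hi hm, compFS_eq_linearCombination, map_zero]
  · intro m i _ hm
    refine (resMap_single k i ⟨id, Function.surjective_id⟩ 1).trans (dif_neg fun hi => ?_)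
    exact hm.not_ge (by simpa using Fintype.card_le_of_surjective i hi)
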